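/- Let F = (x²+y²−2zt)/2, S = (0, 1, z₀, t₀) with z₀ − t₀/2 = i and t₀ ≠ −i (so x₀ = 0, y₀ = 1, x₀²+y₀² = 1 ≠ 0 and x₀²+y₀²+(z₀−t₀/2)² = 0). Parametrize the paraboloid near E = [0:i:−1/2:1] by h(x,y) = (x, i+y, (x²+(i+y)²)/2, 1). Then Δ_S F(h(x,y)) = y(1 − it₀) − t₀(x²+y²)/2 and Q(∇F)(h(x,y)) = 2iy + x² + y². Consequently the intersection multiplicity at the origin of the plane curves {Δ_S F∘h = 0} and {Q(∇F)∘h = 0} equals 2. -/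

import Mathlib

/-!
Since `z₀ = i + t₀/2`, one has `f + (t₀/2)·g = y` and `g = x² + y(2i + y)`, so the ideal
`(f, g)` of `ℂ[x,y]` equals `(y, x²)`. A power series lies in `(y, x²)` exactly when its
coefficients at `1` and `x` vanish, so `ℂ[[x,y]]/(y, x²)` has basis `1, x`.
-/

open Complex MvPolynomial

/-- `Δ_S F ∘ h` pulled back to `ℂ[x,y]`: for `S = (0,1,z₀,t₀)` and
`h(x,y) = (x, i+y, (x²+(i+y)²)/2, 1)` on the paraboloid `F = (x²+y²−2zt)/2`. -/
noncomputable def f19 (z0 t0 : ℂ) : MvPolynomial (Fin 2) ℂ :=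
  C (0 : ℂ) * X 0 + C (1 : ℂ) * (C I + X 1) - C z0 -
    C t0 * (C (2 : ℂ)⁻¹ * (X 0 ^ 2 + (C I + X 1) ^ 2))

/-- `Q(∇F) ∘ h = x² + (i+y)² + 1` pulled back to `ℂ[x,y]`. -/
noncomputable def g19 : MvPolynomial (Fin 2) ℂ :=
  X 0 ^ 2 + (C I + X 1) ^ 2 + 1

/-- The local intersection number at the origin of two plane curves, defined as the
`ℂ`-dimension of `ℂ[[x,y]]/(f,g)`. -/
noncomputable def interMult (f g : MvPolynomial (Fin 2) ℂ) : ℕ :=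
  Module.finrank ℂ
    (MvPowerSeries (Fin 2) ℂ ⧸
      Ideal.span {(f : MvPowerSeries (Fin 2) ℂ), (g : MvPowerSeries (Fin 2) ℂ)})

namespace MvPowerSeries

variable {R : Type*} [CommRing R]

theorem mem_span_X_one_X_zero_sq_iff (F : MvPowerSeries (Fin 2) R) :
    F ∈ Ideal.span {X 1, X 0 ^ 2} ↔ coeff 0 F = 0 ∧ coeff (Finsupp.single 0 1) F = 0 := by
  rw [Ideal.mem_span_pair]
  constructor
  · rintro ⟨a, b, rfl⟩
    rw [X_pow_eq, X_def, mul_comm a, mul_comm b]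
    simp only [map_add, coeff_monomial_mul]
    simp [Finsupp.single_le_iff]
  · rintro ⟨h₀, h₁⟩
    -- `F - x² B` keeps only the monomials of `F` divisible by `y`, besides `1` and `x`.
    let B : MvPowerSeries (Fin 2) R := fun m => coeff (m + Finsupp.single 0 2) F
    have hy : ∀ m : Fin 2 →₀ ℕ, m 1 = 0 → coeff m (F - X 0 ^ 2 * B) = 0 := by
      intro m hm
      rw [map_sub, X_pow_eq, coeff_monomial_mul, one_mul]
      split_ifs with h
      · exact sub_eq_zero.2 (by change _ = coeff (m - _ + _) F; rw [tsub_add_cancel_of_le h])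
      · have hlt : m 0 < 2 := by simpa [Finsupp.single_le_iff] using h
        obtain rfl | rfl : m = 0 ∨ m = Finsupp.single 0 1 := by
          rcases (by omega : m 0 = 0 ∨ m 0 = 1) with hm₀ | hm₀ <;> [left; right] <;>
            ext i <;> fin_cases i <;> simp [hm₀, hm]
        · simpa using h₀
        · simpa using h₁
    obtain ⟨A, hA⟩ := X_dvd_iff.2 hy
    exact ⟨A, B, by rw [mul_comm A, mul_comm B, ← hA, sub_add_cancel]⟩

theorem ker_coeff_zero_prod_coeff_single_zero_one :
    LinearMap.ker
        ((coeff (R := R) (0 : Fin 2 →₀ ℕ)).prod (coeff (R := R) (Finsupp.single 0 1))) =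
      (Ideal.span {X 1, X 0 ^ 2}).restrictScalars R := by
  ext F
  simp [mem_span_X_one_X_zero_sq_iff]

theorem coeff_zero_prod_coeff_single_zero_one_surjective :
    Function.Surjective
      ((coeff (R := R) (0 : Fin 2 →₀ ℕ)).prod (coeff (R := R) (Finsupp.single 0 1))) :=
  fun p => ⟨C p.1 + p.2 • X 0, by simp [coeff_X, coeff_C]⟩

noncomputable def quotientSpanXOneXZeroSqEquiv :
    (MvPowerSeries (Fin 2) R ⧸ (Ideal.span {X 1, X 0 ^ 2} : Ideal (MvPowerSeries (Fin 2) R)))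
      ≃ₗ[R] R × R :=
  (Submodule.Quotient.restrictScalarsEquiv R _).symm ≪≫ₗ
    Submodule.quotEquivOfEq _ _ ker_coeff_zero_prod_coeff_single_zero_one.symm ≪≫ₗ
    LinearMap.quotKerEquivOfSurjective _ coeff_zero_prod_coeff_single_zero_one_surjective

theorem finrank_quotient_span_X_one_X_zero_sq [Nontrivial R] :
    Module.finrank R
      (MvPowerSeries (Fin 2) R ⧸ (Ideal.span {X 1, X 0 ^ 2} : Ideal (MvPowerSeries (Fin 2) R)))
      = 2 := by
  rw [quotientSpanXOneXZeroSqEquiv.finrank_eq, Module.finrank_prod, Module.finrank_self]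

end MvPowerSeries

theorem interMult_eq_of_span_eq {f g f' g' : MvPolynomial (Fin 2) ℂ}
    (h : Ideal.span {f, g} = Ideal.span {f', g'}) : interMult f g = interMult f' g' := by
  have coe_span (p q : MvPolynomial (Fin 2) ℂ) :
      Ideal.span {(p : MvPowerSeries (Fin 2) ℂ), (q : MvPowerSeries (Fin 2) ℂ)} =
        (Ideal.span {p, q}).map coeToMvPowerSeries.ringHom := by
    rw [Ideal.map_span, Set.image_pair]; rfl
  rw [interMult, interMult, coe_span, coe_span, h]

theorem interMult_X_one_X_zero_sq : interMult (X 1) (X 0 ^ 2) = 2 := by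
  rw [interMult, coe_pow, coe_X, coe_X]
  exact MvPowerSeries.finrank_quotient_span_X_one_X_zero_sq

theorem g19_eq : g19 = X 0 ^ 2 + X 1 * (C (2 * I) + X 1) := by
  have hI : (C I : MvPolynomial (Fin 2) ℂ) ^ 2 = -1 := by rw [← map_pow, I_sq, map_neg, map_one]
  rw [g19, map_mul, map_ofNat]
  linear_combination hI

theorem f19_eq {z0 t0 : ℂ} (hz : z0 - t0 / 2 = I) : f19 z0 t0 = X 1 - g19 * C (t0 / 2) := by
  rw [f19, g19, eq_add_of_sub_eq' hz]
  simp only [div_eq_mul_inv, map_add, map_mul, map_zero, map_one]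
  ring

theorem span_f19_g19 {z0 t0 : ℂ} (hz : z0 - t0 / 2 = I) :
    Ideal.span {f19 z0 t0, g19} = Ideal.span {X 1, X 0 ^ 2} := by
  rw [f19_eq hz, Ideal.span_pair_sub_right_mul, g19_eq, Ideal.span_pair_add_left_mul]

theorem stmt19_general (z0 t0 : ℂ) (hz : z0 - t0 / 2 = I) :
    (∀ a b : ℂ, eval (![a, b] : Fin 2 → ℂ) (f19 z0 t0) =
      b * (1 - I * t0) - t0 * (a ^ 2 + b ^ 2) / 2) ∧
    (∀ a b : ℂ, eval (![a, b] : Fin 2 → ℂ) g19 = 2 * I * b + a ^ 2 + b ^ 2) ∧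
    interMult (f19 z0 t0) g19 = 2 := by
  refine ⟨fun a b => ?_, fun a b => ?_, ?_⟩
  · rw [f19_eq hz, g19_eq]
    simp only [map_sub, map_add, map_mul, map_pow, eval_X, eval_C, Matrix.cons_val_zero,
      Matrix.cons_val_one, Matrix.cons_val_fin_one]
    ring
  · rw [g19_eq]
    simp only [map_add, map_mul, map_pow, eval_X, eval_C, Matrix.cons_val_zero,
      Matrix.cons_val_one, Matrix.cons_val_fin_one]
    ring
  · rw [interMult_eq_of_span_eq (span_f19_g19 hz), interMult_X_one_X_zero_sq]

/-- For the paraboloid, `S = (0,1,z₀,t₀)` with `z₀ − t₀/2 = i` and `t₀ ≠ −i`: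
`Δ_S F ∘ h = y(1−it₀) − t₀(x²+y²)/2`, `Q(∇F) ∘ h = 2iy + x² + y²`, and the
intersection multiplicity at the origin of the two curves equals `2`. -/
theorem stmt19 (z0 t0 : ℂ) (hz : z0 - t0 / 2 = I) (ht : t0 ≠ -I) :
    (∀ a b : ℂ, eval (![a, b] : Fin 2 → ℂ) (f19 z0 t0) =
      b * (1 - I * t0) - t0 * (a ^ 2 + b ^ 2) / 2) ∧
    (∀ a b : ℂ, eval (![a, b] : Fin 2 → ℂ) g19 = 2 * I * b + a ^ 2 + b ^ 2) ∧
    interMult (f19 z0 t0) g19 = 2 :=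
  stmt19_general z0 t0 hz
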